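/- Let 0 < α < 1 and L be a C² Lagrangian. Define the discrete fractional functional 𝓛⁻_h(Q) = h ∑_{k=1}^{N} L(Q_k, (Δ₋^α Q)_k, t_k) on (ℝ^d)^{N+1}. Then Q is a discrete extremal of 𝓛⁻_h (D𝓛⁻_h(Q)(W) = 0 for all W with W_0 = W_N = 0) if and only if for all k = 1,...,N−1: ∂L/∂x(Q_k, (Δ₋^α Q)_k, t_k) + (Δ₊^α(∂L/∂v(Q, Δ₋^α Q, τ)))_k = 0. -/

import Mathlib

open Finset

/-!
The derivative at `ε = 0` of the action at `Q + εW` is `h ∑ₖ (⟪∂ₓL, W_k⟫ + ⟪∂ᵥL, (Δ₋^α W)_k⟫)`.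
Reindexing the triangular double sum over `r + j ≤ N` shows that `Δ₊^α` is the adjoint of
`Δ₋^α` on `{0, …, N}`, so for `W` vanishing at both ends the derivative is
`h ∑_{k=1}^{N-1} ⟪E_k, W_k⟫`, with `E` the left-hand side of the Euler–Lagrange equation.
This vanishes for all such `W` iff `E_k = 0` for `1 ≤ k ≤ N - 1` (test with `W` supported at `k`).
-/

/-- Generalized binomial coefficient `C^r_α = α(α−1)⋯(α−r+1)/r!`. -/
noncomputable def genBinom (α : ℝ) (r : ℕ) : ℝ :=
  (∏ i ∈ Finset.range r, (α - i)) / (Nat.factorial r)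

/-- Discrete left Grünwald–Letnikov fractional difference of order α. -/
noncomputable def glLeft {d : ℕ} (α h : ℝ) (F : ℕ → EuclideanSpace ℝ (Fin d))
    (k : ℕ) : EuclideanSpace ℝ (Fin d) :=
  (h ^ α)⁻¹ • ∑ r ∈ Finset.range (k + 1), ((-1 : ℝ) ^ r * genBinom α r) • F (k - r)

/-- Discrete right Grünwald–Letnikov fractional difference of order α. -/
noncomputable def glRight {d : ℕ} (α h : ℝ) (N : ℕ) (G : ℕ → EuclideanSpace ℝ (Fin d))
    (k : ℕ) : EuclideanSpace ℝ (Fin d) :=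
  (h ^ α)⁻¹ • ∑ r ∈ Finset.range (N - k + 1), ((-1 : ℝ) ^ r * genBinom α r) • G (k + r)

open scoped RealInnerProductSpace

section PartialGradients

variable {E F S : Type*} [NormedAddCommGroup E] [InnerProductSpace ℝ E] [CompleteSpace E]
  [NormedAddCommGroup F] [InnerProductSpace ℝ F] [CompleteSpace F]
  [NormedAddCommGroup S] [NormedSpace ℝ S]

theorem hasDerivAt_comp_add_smul_of_differentiableAt {L : E → F → S → ℝ} {x : E} {v : F}
    {s : S} (hL : DifferentiableAt ℝ (fun p : E × F × S => L p.1 p.2.1 p.2.2) (x, v, s))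
    (w : E) (c : F) :
    HasDerivAt (fun ε : ℝ => L (x + ε • w) (v + ε • c) s)
      (⟪gradient (fun y => L y v s) x, w⟫ + ⟪gradient (fun u => L x u s) v, c⟫) 0 := by
  set D := fderiv ℝ (fun p : E × F × S => L p.1 p.2.1 p.2.2) (x, v, s)
  have hD := hL.hasFDerivAt
  have hx : HasFDerivAt (fun y => L y v s) (D.comp (.inl ℝ E (F × S))) x :=
    (hD.comp x (hasFDerivAt_prodMk_left (𝕜 := ℝ) x (v, s)) :)
  have hv : HasFDerivAt (fun u => L x u s)
      (D.comp ((ContinuousLinearMap.inr ℝ E (F × S)).comp (.inl ℝ F S))) v :=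
    (hD.comp v ((hasFDerivAt_prodMk_right (𝕜 := ℝ) x (v, s)).comp v
      (hasFDerivAt_prodMk_left (𝕜 := ℝ) v s)) :)
  have hline : HasDerivAt (fun ε : ℝ => (x + ε • w, v + ε • c, s)) (w, c, 0) 0 := by
    refine HasDerivAt.prodMk ?_ (HasDerivAt.prodMk ?_ (hasDerivAt_const _ s))
    · simpa using ((hasDerivAt_id (0 : ℝ)).smul_const w).const_add x
    · simpa using ((hasDerivAt_id (0 : ℝ)).smul_const c).const_add v
  have hcomp := hD.comp_hasDerivAt_of_eq (0 : ℝ) hline (by simp)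
  rw [inner_gradient_left, inner_gradient_left, hx.fderiv, hv.fderiv]
  refine hcomp.congr_deriv ?_
  rw [ContinuousLinearMap.comp_apply, ContinuousLinearMap.comp_apply, ← map_add]
  congr 1
  simp

end PartialGradients

theorem sum_range_sum_range_eq_sum_range_sum_range_add {M : Type*} [AddCommMonoid M] (N : ℕ)
    (f : ℕ → ℕ → M) :
    ∑ k ∈ range (N + 1), ∑ r ∈ range (k + 1), f k r
      = ∑ j ∈ range (N + 1), ∑ r ∈ range (N - j + 1), f (j + r) r := by
  calc ∑ k ∈ range (N + 1), ∑ r ∈ range (k + 1), f k r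
      = ∑ r ∈ range (N + 1), ∑ k ∈ Ico r (N + 1), f k r :=
        sum_comm' fun k r => by simp only [mem_range, mem_Ico]; omega
    _ = ∑ r ∈ range (N + 1), ∑ j ∈ range (N - r + 1), f (j + r) r := by
        refine sum_congr rfl fun r hr => ?_
        rw [sum_Ico_eq_sum_range, show N + 1 - r = N - r + 1 by simp at hr; omega]
        simp only [add_comm r]
    _ = ∑ j ∈ range (N + 1), ∑ r ∈ range (N - j + 1), f (j + r) r :=
        sum_comm' fun r j => by simp only [mem_range]; omega

theorem sum_Icc_one_eq_sum_range_succ {M : Type*} [AddCommMonoid M] {N : ℕ} {g : ℕ → M}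
    (h0 : g 0 = 0) : ∑ k ∈ Icc 1 N, g k = ∑ k ∈ range (N + 1), g k :=
  sum_subset (fun k hk => by simp at hk ⊢; omega) fun k hk hk' => by
    obtain rfl : k = 0 := by simp at hk hk'; omega
    exact h0

theorem sum_range_succ_eq_sum_Icc_one_sub_one {M : Type*} [AddCommMonoid M] {N : ℕ}
    {g : ℕ → M} (h0 : g 0 = 0) (hN : g N = 0) :
    ∑ k ∈ range (N + 1), g k = ∑ k ∈ Icc 1 (N - 1), g k :=
  (sum_subset (fun k hk => by simp at hk ⊢; omega) fun k hk hk' => by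
    obtain rfl | rfl : k = 0 ∨ k = N := by simp at hk hk'; omega
    exacts [h0, hN]).symm

section GrunwaldLetnikov

variable {d : ℕ} (α h : ℝ)

theorem glLeft_add_smul (Q W : ℕ → EuclideanSpace ℝ (Fin d)) (ε : ℝ) (k : ℕ) :
    glLeft α h (fun j => Q j + ε • W j) k = glLeft α h Q k + ε • glLeft α h W k := by
  simp only [glLeft, smul_add, sum_add_distrib, smul_sum, smul_comm ε]

theorem glLeft_apply_zero (W : ℕ → EuclideanSpace ℝ (Fin d)) :
    glLeft α h W 0 = (h ^ α)⁻¹ • W 0 := by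
  simp [glLeft, genBinom]

theorem sum_inner_glLeft_eq_sum_inner_glRight (N : ℕ) (G W : ℕ → EuclideanSpace ℝ (Fin d)) :
    ∑ k ∈ range (N + 1), ⟪G k, glLeft α h W k⟫
      = ∑ k ∈ range (N + 1), ⟪glRight α h N G k, W k⟫ := by
  simp only [glLeft, glRight, inner_sum, sum_inner,
    real_inner_smul_left, real_inner_smul_right, ← mul_sum]
  congr 1
  simpa using sum_range_sum_range_eq_sum_range_sum_range_add N
    fun k r => (-1) ^ r * genBinom α r * ⟪G k, W (k - r)⟫

end GrunwaldLetnikov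

theorem forall_sum_inner_eq_zero_iff {E : Type*} [NormedAddCommGroup E] [InnerProductSpace ℝ E]
    {N : ℕ} (V : ℕ → E) :
    (∀ W : ℕ → E, W 0 = 0 → W N = 0 → ∑ k ∈ Icc 1 (N - 1), ⟪V k, W k⟫ = 0)
      ↔ ∀ k ∈ Icc 1 (N - 1), V k = 0 := by
  refine ⟨fun hV k hk => ?_, fun hV W _ _ => sum_eq_zero fun k hk => by simp [hV k hk]⟩
  have hk' := mem_Icc.1 hk
  have hsum := hV (Pi.single k (V k)) (Pi.single_eq_of_ne (by omega) _)
    (Pi.single_eq_of_ne (by omega) _)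
  rwa [sum_eq_single_of_mem k hk fun j _ hjk => by simp [Pi.single_eq_of_ne hjk],
    Pi.single_eq_same, inner_self_eq_zero] at hsum

section DiscreteAction

variable {d : ℕ} (α h : ℝ) (N : ℕ)
  (L : EuclideanSpace ℝ (Fin d) → EuclideanSpace ℝ (Fin d) → ℝ → ℝ) (t : ℕ → ℝ)

noncomputable def discreteAction (Q : ℕ → EuclideanSpace ℝ (Fin d)) : ℝ :=
  h * ∑ k ∈ Icc 1 N, L (Q k) (glLeft α h Q k) (t k)

noncomputable def discreteEulerLagrange (Q : ℕ → EuclideanSpace ℝ (Fin d)) (k : ℕ) :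
    EuclideanSpace ℝ (Fin d) :=
  gradient (fun x => L x (glLeft α h Q k) (t k)) (Q k)
    + glRight α h N (fun j => gradient (fun v => L (Q j) v (t j)) (glLeft α h Q j)) k

theorem hasDerivAt_discreteAction
    (hL : Differentiable ℝ
      (fun p : EuclideanSpace ℝ (Fin d) × EuclideanSpace ℝ (Fin d) × ℝ => L p.1 p.2.1 p.2.2))
    (Q W : ℕ → EuclideanSpace ℝ (Fin d)) (hW0 : W 0 = 0) (hWN : W N = 0) :
    HasDerivAt (fun ε : ℝ => discreteAction α h N L t (fun j => Q j + ε • W j))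
      (h * ∑ k ∈ Icc 1 (N - 1), ⟪discreteEulerLagrange α h N L t Q k, W k⟫) 0 := by
  set Lx := fun k => gradient (fun x => L x (glLeft α h Q k) (t k)) (Q k)
  set Lv := fun k => gradient (fun v => L (Q k) v (t k)) (glLeft α h Q k)
  have hterm (k : ℕ) : HasDerivAt
      (fun ε : ℝ => L (Q k + ε • W k) (glLeft α h (fun j => Q j + ε • W j) k) (t k))
      (⟪Lx k, W k⟫ + ⟪Lv k, glLeft α h W k⟫) 0 := by
    simp only [glLeft_add_smul]
    exact hasDerivAt_comp_add_smul_of_differentiableAt (hL _) _ _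
  refine ((HasDerivAt.fun_sum fun k _ => hterm k).const_mul h).congr_deriv ?_
  congr 1
  calc ∑ k ∈ Icc 1 N, (⟪Lx k, W k⟫ + ⟪Lv k, glLeft α h W k⟫)
      = ∑ k ∈ range (N + 1), (⟪Lx k, W k⟫ + ⟪Lv k, glLeft α h W k⟫) :=
        sum_Icc_one_eq_sum_range_succ (by simp [hW0, glLeft_apply_zero])
    _ = ∑ k ∈ range (N + 1), ⟪discreteEulerLagrange α h N L t Q k, W k⟫ := by
        rw [sum_add_distrib, sum_inner_glLeft_eq_sum_inner_glRight, ← sum_add_distrib]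
        simp only [discreteEulerLagrange, inner_add_left, Lx, Lv]
    _ = ∑ k ∈ Icc 1 (N - 1), ⟪discreteEulerLagrange α h N L t Q k, W k⟫ :=
        sum_range_succ_eq_sum_Icc_one_sub_one (by simp [hW0]) (by simp [hWN])

end DiscreteAction

theorem discrete_fractional_variational_principle_general (d N : ℕ) (hN : 0 < N)
    (a b : ℝ) (hab : a < b) (α : ℝ)
    (h : ℝ) (hh : h = (b - a) / N) (t : ℕ → ℝ)
    (L : EuclideanSpace ℝ (Fin d) → EuclideanSpace ℝ (Fin d) → ℝ → ℝ)
    (hL : ContDiff ℝ 2 (fun p : EuclideanSpace ℝ (Fin d) × EuclideanSpace ℝ (Fin d) × ℝ =>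
      L p.1 p.2.1 p.2.2))
    (Q : ℕ → EuclideanSpace ℝ (Fin d)) :
    (∀ W : ℕ → EuclideanSpace ℝ (Fin d), W 0 = 0 → W N = 0 →
        HasDerivAt (fun ε : ℝ =>
          h * ∑ k ∈ Finset.Icc 1 N,
            L (Q k + ε • W k) (glLeft α h (fun j => Q j + ε • W j) k) (t k)) 0 0)
      ↔ ∀ k ∈ Finset.Icc 1 (N - 1),
          gradient (fun x => L x (glLeft α h Q k) (t k)) (Q k)
            + glRight α h N
                (fun j => gradient (fun v => L (Q j) v (t j)) (glLeft α h Q j)) k = 0 := by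
  have hh0 : h ≠ 0 := by
    rw [hh]
    exact div_ne_zero (sub_ne_zero.2 hab.ne') (Nat.cast_ne_zero.2 hN.ne')
  refine Iff.trans ?_ (forall_sum_inner_eq_zero_iff (discreteEulerLagrange α h N L t Q))
  refine forall₃_congr fun W hW0 hWN => ?_
  have hderiv := hasDerivAt_discreteAction α h N L t (hL.differentiable (by norm_num)) Q W hW0 hWN
  exact ⟨fun h0 => (mul_eq_zero.1 (h0.unique hderiv).symm).resolve_left hh0,
    fun hsum => hderiv.congr_deriv (by rw [hsum, mul_zero])⟩

/-- Discrete fractional variational principle: `Q` is a discrete extremal of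
`𝓛⁻_h(Q) = h ∑_{k=1}^N L(Q_k, (Δ₋^α Q)_k, t_k)` iff it satisfies the discrete
fractional Euler–Lagrange equation
`∂L/∂x(Q_k, (Δ₋^α Q)_k, t_k) + (Δ₊^α(∂L/∂v(Q, Δ₋^α Q, τ)))_k = 0`, `k = 1,…,N−1`. -/
theorem discrete_fractional_variational_principle (d N : ℕ) (hN : 0 < N)
    (a b : ℝ) (hab : a < b) (α : ℝ) (hα0 : 0 < α) (hα1 : α < 1)
    (h : ℝ) (hh : h = (b - a) / N) (t : ℕ → ℝ) (ht : ∀ k, t k = a + k * h)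
    (L : EuclideanSpace ℝ (Fin d) → EuclideanSpace ℝ (Fin d) → ℝ → ℝ)
    (hL : ContDiff ℝ 2 (fun p : EuclideanSpace ℝ (Fin d) × EuclideanSpace ℝ (Fin d) × ℝ =>
      L p.1 p.2.1 p.2.2))
    (Q : ℕ → EuclideanSpace ℝ (Fin d)) :
    (∀ W : ℕ → EuclideanSpace ℝ (Fin d), W 0 = 0 → W N = 0 →
        HasDerivAt (fun ε : ℝ =>
          h * ∑ k ∈ Finset.Icc 1 N,
            L (Q k + ε • W k) (glLeft α h (fun j => Q j + ε • W j) k) (t k)) 0 0)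
      ↔ ∀ k ∈ Finset.Icc 1 (N - 1),
          gradient (fun x => L x (glLeft α h Q k) (t k)) (Q k)
            + glRight α h N
                (fun j => gradient (fun v => L (Q j) v (t j)) (glLeft α h Q j)) k = 0 :=
  discrete_fractional_variational_principle_general d N hN a b hab α h hh t L hL Q
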